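/- arXiv:2508.16333 — 3 statements merged into one kernel-verified Lean document; each statement's English description precedes it below -/
import Mathlib

section
/- Let k > 0, s ≥ 0, h ∈ ℝ, c₀ > 0 with k⁻¹s²(1-h) > -1, and let η₊ = (k, -s)ᵀ ∈ ℝ². Let 𝕂 = diag(k, 1) and define the moving set C(t, ã) = {(y,a) ∈ ℝ² : -(y + k l(t)) - s(a - hã) ≤ c₀ and (y + k l(t)) - s(a - hã) ≤ c₀}, where l : [t₀, T] → ℝ is Lipschitz with l̇(t) ≥ 0 a.e. Suppose (y₀, a₀) satisfies η₊ᵀ𝕂⁻¹(y₀ + k l(t₀), (1-h)a₀)ᵀ = c₀ and l(t₀) = 0. Then the function (y(t), a(t)) := (y₀, a₀) - [1/(1 + k⁻¹s²(1-h))] η₊ l(t) satisfies the state-dependent sweeping process -d/dt (y,a)ᵀ ∈ N^{𝕂⁻¹}_{C(t,a(t))}((y(t), a(t))) for almost all t in any interval on which the opposite constraint remains inactive, i.e., (-k, -s)𝕂⁻¹(y(t) + k l(t), (1-h)a(t))ᵀ < c₀. -/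
open MeasureTheory

/-- Explicit plastic-regime solution of the single-spring state-dependent
sweeping process. With `D = 1 + k⁻¹s²(1-h)`, the function
`(Y, A)(t) = (y₀, a₀) - D⁻¹ η₊ l(t)`, `η₊ = (k, -s)`, satisfies
`-(Ẏ, Ȧ) ∈ N^{𝕂⁻¹}_{C(t, A(t))}(Y(t), A(t))` for a.a. `t ∈ [t₀, T]` at which the
opposite constraint is inactive. The normal-cone membership is spelled out via the
`𝕂⁻¹` inner product `⟨u,v⟩ = u₁ k⁻¹ v₁ + u₂ v₂`. -/
theorem single_spring_plastic_solution (k s h c₀ t₀ T y₀ a₀ : ℝ) (l l' : ℝ → ℝ)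
    (hk : 0 < k) (hs : 0 ≤ s) (hc : 0 < c₀)
    (hmod : k⁻¹ * s ^ 2 * (1 - h) > -1)
    (hLip : ∃ M : NNReal, LipschitzWith M l)
    (hl : ∀ᵐ t ∂(volume.restrict (Set.Icc t₀ T)), HasDerivAt l (l' t) t ∧ 0 ≤ l' t)
    (hl0 : l t₀ = 0)
    (hactive : k * k⁻¹ * (y₀ + k * l t₀) + (-s) * ((1 - h) * a₀) = c₀) :
    ∀ᵐ t ∂(volume.restrict (Set.Icc t₀ T)),
      ((-k) * k⁻¹ * ((y₀ - k / (1 + k⁻¹ * s ^ 2 * (1 - h)) * l t) + k * l t) +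
          (-s) * ((1 - h) * (a₀ + s / (1 + k⁻¹ * s ^ 2 * (1 - h)) * l t)) < c₀) →
        (HasDerivAt (fun τ => y₀ - k / (1 + k⁻¹ * s ^ 2 * (1 - h)) * l τ)
            (-(k / (1 + k⁻¹ * s ^ 2 * (1 - h)) * l' t)) t ∧
          HasDerivAt (fun τ => a₀ + s / (1 + k⁻¹ * s ^ 2 * (1 - h)) * l τ)
            (s / (1 + k⁻¹ * s ^ 2 * (1 - h)) * l' t) t ∧
          -- the point (Y t, A t) lies in the moving set C(t, A t):
          (-(( y₀ - k / (1 + k⁻¹ * s ^ 2 * (1 - h)) * l t) + k * l t) -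
              s * ((a₀ + s / (1 + k⁻¹ * s ^ 2 * (1 - h)) * l t) -
                h * (a₀ + s / (1 + k⁻¹ * s ^ 2 * (1 - h)) * l t)) ≤ c₀ ∧
            ((y₀ - k / (1 + k⁻¹ * s ^ 2 * (1 - h)) * l t) + k * l t) -
              s * ((a₀ + s / (1 + k⁻¹ * s ^ 2 * (1 - h)) * l t) -
                h * (a₀ + s / (1 + k⁻¹ * s ^ 2 * (1 - h)) * l t)) ≤ c₀) ∧
          -- the negative velocity lies in the 𝕂⁻¹-normal cone of C(t, A t) at (Y t, A t):
          ∀ p : ℝ × ℝ,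
            (-(p.1 + k * l t) -
                s * (p.2 - h * (a₀ + s / (1 + k⁻¹ * s ^ 2 * (1 - h)) * l t)) ≤ c₀ ∧
              (p.1 + k * l t) -
                s * (p.2 - h * (a₀ + s / (1 + k⁻¹ * s ^ 2 * (1 - h)) * l t)) ≤ c₀) →
            (k / (1 + k⁻¹ * s ^ 2 * (1 - h)) * l' t) * k⁻¹ *
                (p.1 - (y₀ - k / (1 + k⁻¹ * s ^ 2 * (1 - h)) * l t)) +
              (-(s / (1 + k⁻¹ * s ^ 2 * (1 - h)) * l' t)) *
                (p.2 - (a₀ + s / (1 + k⁻¹ * s ^ 2 * (1 - h)) * l t)) ≤ 0) := by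
  have hk' : k ≠ 0 := ne_of_gt hk
  have hkk : k * k⁻¹ = 1 := mul_inv_cancel₀ hk'
  have hD : (0:ℝ) < 1 + k⁻¹ * s ^ 2 * (1 - h) := by linarith
  have hDne : (1 + k⁻¹ * s ^ 2 * (1 - h)) ≠ 0 := ne_of_gt hD
  have h0 : y₀ - s * ((1 - h) * a₀) = c₀ := by
    rw [hl0, mul_zero, add_zero, hkk, one_mul] at hactive; linarith
  filter_upwards [hl] with t ht hinact
  obtain ⟨hd, hl'⟩ := ht
  set D := 1 + k⁻¹ * s ^ 2 * (1 - h) with hDdef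
  have hkD : k * D = k + s ^ 2 * (1 - h) := by
    rw [hDdef]; field_simp
  have key : (y₀ - k / D * l t) + k * l t -
      s * ((a₀ + s / D * l t) - h * (a₀ + s / D * l t)) = c₀ := by
    field_simp
    linear_combination D * h0 + l t * hkD
  refine ⟨?_, ?_, ⟨?_, key.le⟩, ?_⟩
  · simpa using ((hd.const_mul (k / D)).const_sub y₀)
  · simpa using ((hd.const_mul (s / D)).const_add a₀)
  · nlinarith [hinact, hkk]
  · rintro ⟨p1, p2⟩ ⟨_, hp2⟩
    simp only at hp2 ⊢
    have hq : (p1 - (y₀ - k / D * l t)) - s * (p2 - (a₀ + s / D * l t)) ≤ 0 := by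
      nlinarith [key, hp2]
    have hfac : k / D * l' t * k⁻¹ = l' t / D := by
      field_simp
    have hmain : l' t / D * ((p1 - (y₀ - k / D * l t)) - s * (p2 - (a₀ + s / D * l t))) ≤ 0 :=
      mul_nonpos_of_nonneg_of_nonpos (div_nonneg hl' hD.le) hq
    have heq : k / D * l' t * k⁻¹ * (p1 - (y₀ - k / D * l t)) +
        -(s / D * l' t) * (p2 - (a₀ + s / D * l t)) =
        l' t / D * ((p1 - (y₀ - k / D * l t)) - s * (p2 - (a₀ + s / D * l t))) := by
      rw [hfac]; ring
    exact heq.trans_le hmain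
end

section
/- Consider the two-spring sweeping process in ℝ³ with n̂₊₁ = (κ, -s₁, 0)ᵀ, κ = 1/√(k₁⁻¹+k₂⁻¹), k₁,k₂ > 0, s₁ > 0, h₁ ∈ ℝ satisfying (k₁⁻¹+k₂⁻¹)(1-h₁)s₁² > -1, and l̇(t) > 0. Then the localized rate (ŷ̇, ȧ₁, ȧ₂)ᵀ = -[1/(1 + (k₁⁻¹+k₂⁻¹)(1-h₁)s₁²)] l̇(t) n̂₊₁ satisfies the consistency condition n̂₊₁ᵀ(ŷ̇ + κ l̇, (1-h₁)ȧ₁, (1-h₂)ȧ₂)ᵀ = 0 with nonnegative multiplier λ = l̇/(1+(k₁⁻¹+k₂⁻¹)(1-h₁)s₁²) ≥ 0, and the second constraint direction satisfies n̂₊₂ᵀ(ŷ̇ + κ l̇, (1-h₁)ȧ₁, (1-h₂)ȧ₂)ᵀ ≤ 0 if and only if h₁ ≥ 1. -/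
/-! With `K = k₁⁻¹ + k₂⁻¹`, `κ² = 1/K` and `c = (1 - h₁) s₁²`, so `D₁ = 1 + K c` and
`κ² (D₁ - 1) = c`. Moving along `-n̂₊₁` at rate `l̇/D₁` therefore changes the first constraint
by `κ² l̇ (1 - 1/D₁) = c l̇ / D₁` through `ŷ` and by `-c l̇ / D₁` through `a₁`, so it stays active.
The second normal sees only the `ŷ` part `c l̇ / D₁`, whose sign is that of `1 - h₁` since
`D₁ > 0`. -/

lemma sq_one_div_sqrt_mul_self {K : ℝ} (hK : 0 < K) : (1 / Real.sqrt K) ^ 2 * K = 1 := by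
  rw [div_pow, one_pow, Real.sq_sqrt hK.le, one_div_mul_cancel hK.ne']

lemma localized_rate_normal_gap {κ K c l : ℝ} (hκK : κ ^ 2 * K = 1) (hD : 1 + K * c ≠ 0) :
    κ * (-(1 / (1 + K * c)) * l * κ + κ * l) = c * (l / (1 + K * c)) := by
  field_simp
  linear_combination (l * c) * hκK

theorem two_spring_localized_rate_general (k₁ k₂ s₁ s₂ h₁ h₂ ldot κ D₁ yd a1d a2d : ℝ)
    (hk₁ : 0 < k₁) (hk₂ : 0 < k₂) (hs₁ : 0 < s₁) (hldot : 0 < ldot)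
    (hκ : κ = 1 / Real.sqrt (k₁⁻¹ + k₂⁻¹))
    (hD₁ : D₁ = 1 + (k₁⁻¹ + k₂⁻¹) * (1 - h₁) * s₁ ^ 2)
    (hmod : (k₁⁻¹ + k₂⁻¹) * (1 - h₁) * s₁ ^ 2 > -1)
    (hyd : yd = -(1 / D₁) * ldot * κ)
    (ha1d : a1d = -(1 / D₁) * ldot * (-s₁))
    (ha2d : a2d = 0) :
    -- consistency of the first (active) constraint
    (κ * (yd + κ * ldot) + (-s₁) * ((1 - h₁) * a1d) + 0 * ((1 - h₂) * a2d) = 0) ∧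
    -- nonnegative multiplier: -(rate) = λ n̂₊₁ with λ = l̇/D₁ ≥ 0
    (0 ≤ ldot / D₁ ∧
      -yd = (ldot / D₁) * κ ∧ -a1d = (ldot / D₁) * (-s₁) ∧ -a2d = (ldot / D₁) * 0) ∧
    -- second constraint direction nonincreasing iff h₁ ≥ 1
    ((κ * (yd + κ * ldot) + 0 * ((1 - h₁) * a1d) + (-s₂) * ((1 - h₂) * a2d) ≤ 0) ↔
      1 ≤ h₁) := by
  have hκK : κ ^ 2 * (k₁⁻¹ + k₂⁻¹) = 1 := hκ ▸ sq_one_div_sqrt_mul_self (by positivity)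
  have hD₁' : D₁ = 1 + (k₁⁻¹ + k₂⁻¹) * ((1 - h₁) * s₁ ^ 2) := by rw [hD₁, mul_assoc]
  have hDpos : 0 < D₁ := by linarith
  have hgap : κ * (yd + κ * ldot) = (1 - h₁) * s₁ ^ 2 * (ldot / D₁) := by
    rw [hyd, hD₁']
    exact localized_rate_normal_gap hκK (hD₁' ▸ hDpos.ne')
  have hrate : 0 < ldot / D₁ := div_pos hldot hDpos
  subst ha1d ha2d
  refine ⟨?_, ⟨hrate.le, by rw [hyd]; ring, by ring, by ring⟩, ?_⟩
  · rw [hgap]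
    ring
  · rw [mul_zero, mul_zero, add_zero, zero_mul, add_zero, hgap,
      ← not_lt, ← not_lt, mul_pos_iff_of_pos_right hrate, mul_pos_iff_of_pos_right (pow_pos hs₁ 2),
      sub_pos]

/-- For the two-spring sweeping process in ℝ³, the localized rate
`(ŷ̇,ȧ₁,ȧ₂) = -[1/(1+(k₁⁻¹+k₂⁻¹)(1-h₁)s₁²)] l̇ n̂₊₁` (with `n̂₊₁ = (κ,-s₁,0)`)
satisfies the consistency condition for the first constraint with nonnegative
multiplier `λ = l̇/(1+(k₁⁻¹+k₂⁻¹)(1-h₁)s₁²)`, and the second constraint direction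
value is ≤ 0 iff `h₁ ≥ 1`. -/
theorem two_spring_localized_rate (k₁ k₂ s₁ s₂ h₁ h₂ ldot κ D₁ yd a1d a2d : ℝ)
    (hk₁ : 0 < k₁) (hk₂ : 0 < k₂) (hs₁ : 0 < s₁) (hs₂ : 0 < s₂) (hldot : 0 < ldot)
    (hκ : κ = 1 / Real.sqrt (k₁⁻¹ + k₂⁻¹))
    (hD₁ : D₁ = 1 + (k₁⁻¹ + k₂⁻¹) * (1 - h₁) * s₁ ^ 2)
    (hmod : (k₁⁻¹ + k₂⁻¹) * (1 - h₁) * s₁ ^ 2 > -1)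
    (hyd : yd = -(1 / D₁) * ldot * κ)
    (ha1d : a1d = -(1 / D₁) * ldot * (-s₁))
    (ha2d : a2d = 0) :
    -- consistency of the first (active) constraint
    (κ * (yd + κ * ldot) + (-s₁) * ((1 - h₁) * a1d) + 0 * ((1 - h₂) * a2d) = 0) ∧
    -- nonnegative multiplier: -(rate) = λ n̂₊₁ with λ = l̇/D₁ ≥ 0
    (0 ≤ ldot / D₁ ∧
      -yd = (ldot / D₁) * κ ∧ -a1d = (ldot / D₁) * (-s₁) ∧ -a2d = (ldot / D₁) * 0) ∧
    -- second constraint direction nonincreasing iff h₁ ≥ 1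
    ((κ * (yd + κ * ldot) + 0 * ((1 - h₁) * a1d) + (-s₂) * ((1 - h₂) * a2d) ≤ 0) ↔
      1 ≤ h₁) :=
  two_spring_localized_rate_general k₁ k₂ s₁ s₂ h₁ h₂ ldot κ D₁ yd a1d a2d hk₁ hk₂ hs₁ hldot hκ hD₁
    hmod hyd ha1d ha2d
end

section
/- Let s₁, ..., s_m ≥ 0 and C(ã) ⊂ ℝ^{2m} as above. The only element of the normal cone N_{C(ã)}(σ, a) whose a-block component is zero is the zero vector 0 ∈ ℝ^{2m}. -/
open Matrix

/-- (assuming `sᵢ > 0` for all `i`) The only element of the normal cone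
of `C(ã)` at `(σ,a) ∈ C(ã)` whose `a`-block is zero is the zero vector of ℝ^{2m}. -/
theorem normalCone_zero_a_block (m : ℕ) (s h c₀ atil : Fin m → ℝ)
    (hs : ∀ i, 0 < s i) (hc : ∀ i, 0 < c₀ i)
    (σ a : Fin m → ℝ)
    (hmem : ∀ i, -σ i - s i * (a i - h i * atil i) ≤ c₀ i ∧
      σ i - s i * (a i - h i * atil i) ≤ c₀ i) :
    ∀ w z : Fin m → ℝ,
      (∀ p : (Fin m → ℝ) × (Fin m → ℝ),
        (∀ i, -p.1 i - s i * (p.2 i - h i * atil i) ≤ c₀ i ∧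
          p.1 i - s i * (p.2 i - h i * atil i) ≤ c₀ i) →
        w ⬝ᵥ (p.1 - σ) + z ⬝ᵥ (p.2 - a) ≤ 0) →
      z = 0 → (w = 0 ∧ z = 0) := by
  intro w z hNC hz
  refine ⟨?_, hz⟩
  funext i
  have key : w i * w i ≤ 0 := by
    set p1 : Fin m → ℝ := fun k => σ k + (Pi.single i (w i) : Fin m → ℝ) k with hp1
    set p2 : Fin m → ℝ := fun k => h k * atil k + |p1 k| / s k with hp2
    have hfeas : ∀ j, -(p1, p2).1 j - s j * ((p1, p2).2 j - h j * atil j) ≤ c₀ j ∧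
        (p1, p2).1 j - s j * ((p1, p2).2 j - h j * atil j) ≤ c₀ j := by
      intro j
      have hsj := hs j
      have heq : s j * (p2 j - h j * atil j) = |p1 j| := by
        rw [hp2]
        field_simp
        ring
      rw [heq]
      have h1 := neg_abs_le (p1 j)
      have h2 := le_abs_self (p1 j)
      have h3 := (hc j).le
      constructor <;> linarith
    have hthis := hNC (p1, p2) hfeas
    rw [hz] at hthis
    have hsub : p1 - σ = (Pi.single i (w i) : Fin m → ℝ) := by
      ext k
      simp [hp1]
    rw [hsub, zero_dotProduct, add_zero, dotProduct_single] at hthis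
    exact hthis
  have : w i = 0 := by nlinarith
  simpa using this
end
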